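/- Vector-valued nonlinearity bounder (Lemma 4 of the paper): let g : ℝᵐ → ℝᵐ be twice continuously differentiable, q ∈ ℝᵐ, Q ∈ 𝕊₊^m, and D a convex compact set containing E(q,Q). Suppose for each i there is an invertible Sᵢ ∈ ℝ^{m×m} and a constant F̄ᵢ ≥ 0 with F̄ᵢ ≥ ‖(∂²gᵢ/∂y²)(y) Sᵢ‖_F for all y ∈ D. Define the diagonal matrix Q_n := (1/4) diag( F̄ᵢ² ‖Sᵢ⁻¹ Q‖_F² ). Then for every δ ∈ E(Q), the Taylor remainder n(δ) := g(q+δ) − g(q) − (∂g/∂y)(q) δ lies in the ellipsoid E(Q_n). -/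

import Mathlib

open Matrix MeasureTheory

/-- The square root `PosSemidef.sqrt` of the older Mathlib, spelled out. -/
noncomputable def posSemidefSqrt {m : ℕ} {Q : Matrix (Fin m) (Fin m) ℝ} (hQ : Q.PosSemidef) :
    Matrix (Fin m) (Fin m) ℝ :=
  (hQ.1.eigenvectorUnitary : Matrix (Fin m) (Fin m) ℝ) *
    diagonal ((↑) ∘ (√·) ∘ hQ.1.eigenvalues) *
    (star hQ.1.eigenvectorUnitary : Matrix (Fin m) (Fin m) ℝ)

noncomputable def ellipsoid {m : ℕ} {Q : Matrix (Fin m) (Fin m) ℝ}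
    (q : Fin m → ℝ) (hQ : Q.PosSemidef) : Set (Fin m → ℝ) :=
  {x | ∃ v : Fin m → ℝ, v ⬝ᵥ v ≤ 1 ∧ x = q + (posSemidefSqrt hQ).mulVec v}

noncomputable def frob {p q : ℕ} (M : Matrix (Fin p) (Fin q) ℝ) : ℝ :=
  Real.sqrt (Matrix.trace (Mᵀ * M))

noncomputable def hess {m : ℕ} (g : (Fin m → ℝ) → ℝ) (y : Fin m → ℝ) :
    Matrix (Fin m) (Fin m) ℝ :=
  Matrix.of fun i j => fderiv ℝ (fun z => fderiv ℝ g z (Pi.single j 1)) y (Pi.single i 1)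

/-!
Along the segment `t ↦ q + t • δ` the `i`-th remainder is that of a scalar `C²` function of `t`,
so it is at most half a bound on the second directional derivative `δᵀ Hᵢ δ`, `Hᵢ` the Hessian
of `gᵢ` at a point of `D`. Writing `δ = Q^{1/2} v` with `vᵀ v ≤ 1`, this quadratic form is at most
`‖Q^{1/2} Hᵢ Q^{1/2}‖_F`, whose square is `tr ((Hᵢ Q)²) ≤ ‖Hᵢ Q‖_F²`; finally
`‖Hᵢ Q‖_F = ‖Hᵢ Sᵢ · Sᵢ⁻¹ Q‖_F ≤ ‖Hᵢ Sᵢ‖_F ‖Sᵢ⁻¹ Q‖_F ≤ F̄ᵢ ‖Sᵢ⁻¹ Q‖_F`.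
-/

lemma posSemidefSqrt_transpose {m : ℕ} {Q : Matrix (Fin m) (Fin m) ℝ} (hQ : Q.PosSemidef) :
    (posSemidefSqrt hQ)ᵀ = posSemidefSqrt hQ := by
  rw [← conjTranspose_eq_transpose_of_trivial, posSemidefSqrt, conjTranspose_mul,
    conjTranspose_mul, diagonal_conjTranspose, ← star_eq_conjTranspose, ← star_eq_conjTranspose,
    star_star, Matrix.mul_assoc]
  congr 3

lemma posSemidefSqrt_mul_self {m : ℕ} {Q : Matrix (Fin m) (Fin m) ℝ} (hQ : Q.PosSemidef) :
    posSemidefSqrt hQ * posSemidefSqrt hQ = Q := by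
  set U : Matrix (Fin m) (Fin m) ℝ := ↑hQ.1.eigenvectorUnitary
  set R : Matrix (Fin m) (Fin m) ℝ := diagonal ((↑) ∘ (√·) ∘ hQ.1.eigenvalues)
  have hR : R * R = diagonal (RCLike.ofReal ∘ hQ.1.eigenvalues) := by
    rw [diagonal_mul_diagonal]
    congr 1
    funext i
    simp [Real.mul_self_sqrt (hQ.eigenvalues_nonneg i)]
  calc posSemidefSqrt hQ * posSemidefSqrt hQ
      = U * (R * (star U * U) * R) * star U := by
        simp only [posSemidefSqrt, Matrix.mul_assoc]; rfl
    _ = Q := by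
        rw [Unitary.coe_star_mul_self, Matrix.mul_one, hR]
        conv_rhs => rw [hQ.1.spectral_theorem, Unitary.conjStarAlgAut_apply]

lemma add_smul_mem_ellipsoid {m : ℕ} {Q : Matrix (Fin m) (Fin m) ℝ} (hQ : Q.PosSemidef)
    (q : Fin m → ℝ) {δ : Fin m → ℝ} (hδ : δ ∈ ellipsoid 0 hQ) {t : ℝ}
    (ht : t ∈ Set.Icc (0 : ℝ) 1) :
    q + t • δ ∈ ellipsoid q hQ := by
  obtain ⟨v, hv, rfl⟩ := hδ
  refine ⟨t • v, ?_, by rw [zero_add, mulVec_smul]⟩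
  have ht2 : t ^ 2 ≤ 1 := pow_le_one₀ ht.1 ht.2
  calc (t • v) ⬝ᵥ (t • v) = t ^ 2 * (v ⬝ᵥ v) := by
        rw [smul_dotProduct, dotProduct_smul, smul_eq_mul, smul_eq_mul]; ring
    _ ≤ 1 := by nlinarith [dotProduct_self_star_nonneg v]

open scoped Matrix.Norms.Frobenius

section Frobenius

variable {l n : Type*} [Fintype l] [Fintype n]

lemma trace_transpose_mul_self_eq_sum_sq (M : Matrix l n ℝ) :
    trace (Mᵀ * M) = ∑ i, ∑ j, M i j ^ 2 := by
  simp only [trace, diag, mul_apply, transpose_apply, sq]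
  exact Finset.sum_comm

lemma trace_transpose_mul_self_nonneg (M : Matrix l n ℝ) : 0 ≤ trace (Mᵀ * M) := by
  rw [trace_transpose_mul_self_eq_sum_sq]
  positivity

lemma frobenius_norm_sq_eq_trace (M : Matrix l n ℝ) : ‖M‖ ^ 2 = trace (Mᵀ * M) := by
  rw [trace_transpose_mul_self_eq_sum_sq, frobenius_norm_def, ← Real.sqrt_eq_rpow,
    Real.sq_sqrt (by positivity)]
  simp

lemma trace_mul_self_le_trace_transpose_mul_self (X : Matrix n n ℝ) :
    trace (X * X) ≤ trace (Xᵀ * X) := by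
  have h := trace_transpose_mul_self_nonneg (X - Xᵀ)
  simp only [transpose_sub, transpose_transpose, sub_mul, mul_sub, trace_sub] at h
  rw [← trace_transpose (Xᵀ * Xᵀ), transpose_mul, transpose_transpose, trace_mul_comm X Xᵀ] at h
  linarith

lemma norm_toLp_mulVec_le (A : Matrix l n ℝ) (v : n → ℝ) :
    ‖WithLp.toLp 2 (A *ᵥ v)‖ ≤ ‖A‖ * ‖WithLp.toLp 2 v‖ := by
  rw [← frobenius_norm_replicateCol (ι := Unit), ← frobenius_norm_replicateCol (ι := Unit),
    replicateCol_mulVec]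
  exact frobenius_norm_mul _ _

lemma abs_dotProduct_mulVec_le (A : Matrix n n ℝ) (v : n → ℝ) :
    |v ⬝ᵥ (A *ᵥ v)| ≤ ‖A‖ * (v ⬝ᵥ v) := by
  have hv : v ⬝ᵥ v = ‖WithLp.toLp 2 v‖ ^ 2 := by
    rw [EuclideanSpace.norm_sq_eq]; simp [dotProduct, sq]
  calc |v ⬝ᵥ (A *ᵥ v)| = |inner ℝ (WithLp.toLp 2 (A *ᵥ v)) (WithLp.toLp 2 v)| := by
        rw [EuclideanSpace.inner_toLp_toLp]; simp
    _ ≤ ‖WithLp.toLp 2 (A *ᵥ v)‖ * ‖WithLp.toLp 2 v‖ := abs_real_inner_le_norm _ _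
    _ ≤ ‖A‖ * ‖WithLp.toLp 2 v‖ * ‖WithLp.toLp 2 v‖ := by
        gcongr; exact norm_toLp_mulVec_le A v
    _ = ‖A‖ * (v ⬝ᵥ v) := by rw [hv]; ring

end Frobenius

lemma frob_eq_norm {p q : ℕ} (M : Matrix (Fin p) (Fin q) ℝ) : frob M = ‖M‖ := by
  rw [frob, ← frobenius_norm_sq_eq_trace, Real.sqrt_sq (norm_nonneg _)]

lemma abs_quadForm_mulVec_sqrt_le {n : Type*} [Fintype n] {R Q H : Matrix n n ℝ}
    (hR : Rᵀ = R) (hRR : R * R = Q) (hH : Hᵀ = H) {v : n → ℝ} (hv : v ⬝ᵥ v ≤ 1) :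
    |(R *ᵥ v) ⬝ᵥ (H *ᵥ (R *ᵥ v))| ≤ ‖H * Q‖ := by
  have hform : (R *ᵥ v) ⬝ᵥ (H *ᵥ (R *ᵥ v)) = v ⬝ᵥ ((R * H * R) *ᵥ v) := by
    rw [dotProduct_mulVec, vecMul_mulVec, ← dotProduct_mulVec, mulVec_mulVec, hR]
  have hsq : ‖R * H * R‖ ^ 2 ≤ ‖H * Q‖ ^ 2 := by
    rw [frobenius_norm_sq_eq_trace, frobenius_norm_sq_eq_trace]
    calc trace ((R * H * R)ᵀ * (R * H * R)) = trace ((H * Q) * (H * Q)) := by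
          rw [transpose_mul, transpose_mul, hR, hH, ← hRR]
          simp only [Matrix.mul_assoc]
          rw [trace_mul_comm]
          simp only [Matrix.mul_assoc]
      _ ≤ trace ((H * Q)ᵀ * (H * Q)) := trace_mul_self_le_trace_transpose_mul_self _
  calc |(R *ᵥ v) ⬝ᵥ (H *ᵥ (R *ᵥ v))| ≤ ‖R * H * R‖ * (v ⬝ᵥ v) := by
        rw [hform]; exact abs_dotProduct_mulVec_le _ _
    _ ≤ ‖R * H * R‖ := mul_le_of_le_one_right (norm_nonneg _) hv
    _ ≤ ‖H * Q‖ := pow_le_pow_iff_left₀ (norm_nonneg _) (norm_nonneg _) two_ne_zero |>.mp hsq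

lemma norm_mul_le_norm_mul_mul_norm_inv_mul {n : Type*} [Fintype n] [DecidableEq n]
    {S : Matrix n n ℝ} (hS : IsUnit S.det) (H Q : Matrix n n ℝ) :
    ‖H * Q‖ ≤ ‖H * S‖ * ‖S⁻¹ * Q‖ := by
  calc ‖H * Q‖ = ‖H * S * (S⁻¹ * Q)‖ := by
        rw [Matrix.mul_assoc, ← Matrix.mul_assoc S, mul_nonsing_inv _ hS, Matrix.one_mul]
    _ ≤ ‖H * S‖ * ‖S⁻¹ * Q‖ := frobenius_norm_mul _ _

open Set

lemma norm_sub_sub_deriv_le_of_norm_deriv2_le {E : Type*} [NormedAddCommGroup E] [NormedSpace ℝ E]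
    {f f' f'' : ℝ → E} {K : ℝ} (hf : ∀ t ∈ Icc (0 : ℝ) 1, HasDerivAt f (f' t) t)
    (hf' : ∀ t ∈ Icc (0 : ℝ) 1, HasDerivAt f' (f'' t) t) (hK : ∀ t ∈ Icc (0 : ℝ) 1, ‖f'' t‖ ≤ K) :
    ‖f 1 - f 0 - f' 0‖ ≤ K / 2 := by
  have hf'_sub : ∀ t ∈ Icc (0 : ℝ) 1, ‖f' t - f' 0‖ ≤ K * t := by
    simpa using norm_image_sub_le_of_norm_deriv_le_segment'
      (fun t ht => (hf' t ht).hasDerivWithinAt) fun t ht => hK t (Ico_subset_Icc_self ht)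
  have hrem : ∀ t ∈ Icc (0 : ℝ) 1,
      HasDerivAt (fun s => f s - f 0 - s • f' 0) (f' t - f' 0) t := fun t ht => by
    simpa using ((hf t ht).sub_const (f 0)).fun_sub ((hasDerivAt_id' t).smul_const (f' 0))
  -- `K t² / 2` fences the remainder `f t - f 0 - t • f' 0`, whose derivative has norm `≤ K t`.
  have hB : ∀ t : ℝ, HasDerivAt (fun s => K / 2 * s ^ 2) (K * t) t := fun t =>
    ((hasDerivAt_pow 2 t).const_mul (K / 2)).congr_deriv (by norm_num; ring)
  simpa using image_norm_le_of_norm_deriv_right_le_deriv_boundary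
    (f := fun s => f s - f 0 - s • f' 0)
    (fun t ht => (hrem t ht).continuousAt.continuousWithinAt)
    (fun t ht => (hrem t (Ico_subset_Icc_self ht)).hasDerivWithinAt) (by simp) hB
    (fun t ht => hf'_sub t (Ico_subset_Icc_self ht)) (right_mem_Icc.2 zero_le_one)

lemma hess_apply {m : ℕ} {φ : (Fin m → ℝ) → ℝ} {y : Fin m → ℝ}
    (hφ : DifferentiableAt ℝ (fderiv ℝ φ) y) (a b : Fin m) :
    hess φ y a b = fderiv ℝ (fderiv ℝ φ) y (Pi.single a 1) (Pi.single b 1) := by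
  rw [hess, of_apply, fderiv_clm_apply hφ (differentiableAt_const _)]
  simp

lemma fderiv_fderiv_apply_eq_dotProduct_hess {m : ℕ} {φ : (Fin m → ℝ) → ℝ} {y : Fin m → ℝ}
    (hφ : DifferentiableAt ℝ (fderiv ℝ φ) y) (v w : Fin m → ℝ) :
    fderiv ℝ (fderiv ℝ φ) y v w = v ⬝ᵥ (hess φ y *ᵥ w) := by
  set B : (Fin m → ℝ) →ₗ[ℝ] (Fin m → ℝ) →ₗ[ℝ] ℝ :=
    (ContinuousLinearMap.coeLM ℝ).comp (fderiv ℝ (fderiv ℝ φ) y).toLinearMap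
  have hB : LinearMap.toMatrix₂' ℝ B = hess φ y := by
    ext a b
    simp [B, LinearMap.toMatrix₂'_apply, hess_apply hφ]
  calc fderiv ℝ (fderiv ℝ φ) y v w = Matrix.toLinearMap₂' ℝ (LinearMap.toMatrix₂' ℝ B) v w := by
        rw [Matrix.toLinearMap₂'_toMatrix']; rfl
    _ = v ⬝ᵥ (hess φ y *ᵥ w) := by rw [hB, Matrix.toLinearMap₂'_apply']

lemma hess_transpose {m : ℕ} {φ : (Fin m → ℝ) → ℝ} {y : Fin m → ℝ}
    (hφ : ContDiffAt ℝ 2 φ y) : (hess φ y)ᵀ = hess φ y := by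
  have hφ' : DifferentiableAt ℝ (fderiv ℝ φ) y :=
    (hφ.fderiv_right le_rfl).differentiableAt one_ne_zero
  ext a b
  rw [transpose_apply, hess_apply hφ', hess_apply hφ']
  exact hφ.isSymmSndFDerivAt (by simp [minSmoothness_of_isRCLikeNormedField]) _ _

lemma norm_sub_sub_fderiv_le {E F : Type*} [NormedAddCommGroup E] [NormedSpace ℝ E]
    [NormedAddCommGroup F] [NormedSpace ℝ F] {φ : E → F} (hφ : ContDiff ℝ 2 φ) (q δ : E) {K : ℝ}
    (hK : ∀ t ∈ Icc (0 : ℝ) 1, ‖fderiv ℝ (fderiv ℝ φ) (q + t • δ) δ δ‖ ≤ K) :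
    ‖φ (q + δ) - φ q - fderiv ℝ φ q δ‖ ≤ K / 2 := by
  have hline : ∀ t : ℝ, HasDerivAt (fun s : ℝ => q + s • δ) δ t := fun t => by
    simpa using ((hasDerivAt_id t).smul_const δ).const_add q
  have hφ' : Differentiable ℝ (fderiv ℝ φ) :=
    (hφ.fderiv_right le_rfl).differentiable one_ne_zero
  have h := norm_sub_sub_deriv_le_of_norm_deriv2_le (f := fun t => φ (q + t • δ))
    (fun t _ => (hφ.differentiable two_ne_zero _).hasFDerivAt.comp_hasDerivAt t (hline t))
    (fun t _ => ((hφ' _).hasFDerivAt.comp_hasDerivAt t (hline t)).clm_apply (hasDerivAt_const t δ))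
    (by simpa using hK)
  simpa using h

theorem stmt13_general {m : ℕ} (g : (Fin m → ℝ) → (Fin m → ℝ)) (hg : ContDiff ℝ 2 g)
    (q : Fin m → ℝ) {Q : Matrix (Fin m) (Fin m) ℝ} (hQ : Q.PosSemidef)
    (S : Fin m → Matrix (Fin m) (Fin m) ℝ) (hS : ∀ i, IsUnit (S i).det)
    (D : Set (Fin m → ℝ))
    (hsub : ellipsoid q hQ ⊆ D)
    (F : Fin m → ℝ)
    (hF : ∀ i, ∀ y ∈ D, frob (hess (fun z => g z i) y * S i) ≤ F i) :
    ∀ δ ∈ ellipsoid 0 hQ, ∀ i,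
      |g (q + δ) i - g q i - fderiv ℝ g q δ i| ≤ (1 / 2) * F i * frob ((S i)⁻¹ * Q) := by
  intro δ hδ i
  have hgi : ContDiff ℝ 2 (fun z => g z i) := contDiff_pi.mp hg i
  have hK : ∀ t ∈ Icc (0 : ℝ) 1,
      ‖fderiv ℝ (fderiv ℝ fun z => g z i) (q + t • δ) δ δ‖ ≤ F i * ‖(S i)⁻¹ * Q‖ := by
    intro t ht
    have hy := hsub (add_smul_mem_ellipsoid hQ q hδ ht)
    obtain ⟨v, hv, hδv⟩ := hδ
    rw [zero_add] at hδv
    subst hδv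
    rw [Real.norm_eq_abs, fderiv_fderiv_apply_eq_dotProduct_hess
      ((hgi.fderiv_right le_rfl).differentiable one_ne_zero _)]
    calc _ ≤ ‖hess (fun z => g z i) _ * Q‖ :=
          abs_quadForm_mulVec_sqrt_le (posSemidefSqrt_transpose hQ) (posSemidefSqrt_mul_self hQ)
            (hess_transpose hgi.contDiffAt) hv
      _ ≤ ‖hess (fun z => g z i) _ * S i‖ * ‖(S i)⁻¹ * Q‖ :=
          norm_mul_le_norm_mul_mul_norm_inv_mul (hS i) _ _
      _ ≤ F i * ‖(S i)⁻¹ * Q‖ :=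
          mul_le_mul_of_nonneg_right (frob_eq_norm _ ▸ hF i _ hy) (norm_nonneg _)
  have h := norm_sub_sub_fderiv_le hgi q δ hK
  rw [fderiv_apply (hg.differentiable two_ne_zero q)] at h
  simpa [Real.norm_eq_abs, frob_eq_norm, div_eq_inv_mul, mul_assoc] using h

theorem stmt13 {m : ℕ} (g : (Fin m → ℝ) → (Fin m → ℝ)) (hg : ContDiff ℝ 2 g)
    (q : Fin m → ℝ) {Q : Matrix (Fin m) (Fin m) ℝ} (hQ : Q.PosSemidef)
    (S : Fin m → Matrix (Fin m) (Fin m) ℝ) (hS : ∀ i, IsUnit (S i).det)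
    (D : Set (Fin m → ℝ)) (hD : Convex ℝ D) (hDc : IsCompact D)
    (hsub : ellipsoid q hQ ⊆ D)
    (F : Fin m → ℝ) (hF0 : ∀ i, 0 ≤ F i)
    (hF : ∀ i, ∀ y ∈ D, frob (hess (fun z => g z i) y * S i) ≤ F i) :
    ∀ δ ∈ ellipsoid 0 hQ, ∀ i,
      |g (q + δ) i - g q i - fderiv ℝ g q δ i| ≤ (1 / 2) * F i * frob ((S i)⁻¹ * Q) :=
  stmt13_general g hg q hQ S hS D hsub F hF
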